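/- Let P be a convex subset (e.g., a convex polytope) in Euclidean space ℝⁿ, and let a ≥ 1, R > 0. The nearest-point projection from the boundary ∂N_{aR}(P) of the closed aR-neighborhood of P onto the boundary ∂N_R(P) of the closed R-neighborhood, given by x ↦ the point of [x₀, x] at distance R from P where x₀ is the projection of x onto P, is a bilipschitz map with respect to the induced length metrics, with bilipschitz constant depending only on a. -/

import Mathlib

/-!
Let `f` be the nearest-point projection onto `P` and `ρₜ x = f x + t • (x - f x)` the radial
rescaling of the distance to `P`. Since `P` is convex, `f` is `1`-Lipschitz and is constant along
the rays of `ρ`, so `ρₜ` multiplies the distance to `P` by `t`, satisfies `ρₛ ∘ ρₜ = ρₛₜ`, and is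
`(t + |1 - t|)`-Lipschitz. The projection in question is `ρ_{1/a}` on `∂N_{aR}(P)`; it is
`1`-Lipschitz with inverse `ρ_a`, which is `(2a - 1)`-Lipschitz. Lipschitz maps between two sets
stretch the lengths of paths, hence the length metrics, by at most their constant.
-/

open Metric Set
open scoped ENNReal NNReal RealInnerProductSpace

noncomputable def lengthDist {E : Type*} [MetricSpace E] (S : Set E) (x y : E) : ℝ≥0∞ :=
  ⨅ (γ : ℝ → E) (_ : ContinuousOn γ (Set.Icc 0 1)) (_ : γ 0 = x) (_ : γ 1 = y)
    (_ : ∀ t ∈ Set.Icc (0:ℝ) 1, γ t ∈ S), eVariationOn γ (Set.Icc 0 1)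

section LengthDist

variable {E F : Type*} [MetricSpace E] [MetricSpace F]

theorem lengthDist_le_eVariationOn {S : Set E} {x y : E} {γ : ℝ → E}
    (hγ : ContinuousOn γ (Icc 0 1)) (h0 : γ 0 = x) (h1 : γ 1 = y)
    (hS : ∀ t ∈ Icc (0:ℝ) 1, γ t ∈ S) :
    lengthDist S x y ≤ eVariationOn γ (Icc 0 1) :=
  iInf_le_of_le γ <| iInf_le_of_le hγ <| iInf_le_of_le h0 <| iInf_le_of_le h1 <| iInf_le _ hS

theorem le_mul_lengthDist {S : Set E} {x y : E} {c : ℝ≥0∞} {K : ℝ≥0} (hK : K ≠ 0)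
    (h : ∀ γ : ℝ → E, ContinuousOn γ (Icc 0 1) → γ 0 = x → γ 1 = y →
      (∀ t ∈ Icc (0:ℝ) 1, γ t ∈ S) → c ≤ K * eVariationOn γ (Icc 0 1)) :
    c ≤ K * lengthDist S x y := by
  simp only [lengthDist, ENNReal.mul_iInf_of_ne (ENNReal.coe_ne_zero.2 hK) ENNReal.coe_ne_top]
  exact le_iInf fun γ => le_iInf fun hγ => le_iInf fun h0 => le_iInf fun h1 =>
    le_iInf fun hS => h γ hγ h0 h1 hS

theorem LipschitzOnWith.lengthDist_le {f : E → F} {K : ℝ≥0} {S : Set E} {T : Set F}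
    (hf : LipschitzOnWith K f S) (hK : K ≠ 0) (hST : MapsTo f S T) (x y : E) :
    lengthDist T (f x) (f y) ≤ K * lengthDist S x y :=
  le_mul_lengthDist hK fun γ hγ h0 h1 hS =>
    have hγS : MapsTo γ (Icc 0 1) S := hS
    (lengthDist_le_eVariationOn (hf.continuousOn.comp hγ hγS) (by simp [h0]) (by simp [h1])
      fun t ht => hST (hS t ht)).trans (hf.comp_eVariationOn_le hγS)

end LengthDist

section NearestPoint

def IsNearestPointMap {E : Type*} [PseudoMetricSpace E] (P : Set E) (f : E → E) : Prop :=
  ∀ x, f x ∈ P ∧ dist x (f x) = infDist x P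

theorem IsClosed.exists_isNearestPointMap {E : Type*} [MetricSpace E] [ProperSpace E]
    {P : Set E} (hP : IsClosed P) (hne : P.Nonempty) : ∃ f, IsNearestPointMap P f := by
  choose f hfP hfd using fun x => hP.exists_infDist_eq_dist hne x
  exact ⟨f, fun x => ⟨hfP x, (hfd x).symm⟩⟩

variable {E : Type*} [NormedAddCommGroup E] [InnerProductSpace ℝ E] {P : Set E}

theorem Convex.dist_eq_infDist_iff (hP : Convex ℝ P) {x w : E} (hw : w ∈ P) :
    dist x w = infDist x P ↔ ∀ q ∈ P, ⟪x - w, q - w⟫ ≤ 0 := by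
  rw [← norm_eq_iInf_iff_real_inner_le_zero hP hw, infDist_eq_iInf]
  simp only [dist_eq_norm]

theorem dist_le_of_inner_sub_nonpos {x y w w' : E}
    (h : ⟪x - w, w' - w⟫ ≤ 0) (h' : ⟪y - w', w - w'⟫ ≤ 0) : dist w w' ≤ dist x y := by
  have hx : 0 ≤ ⟪x - w, w - w'⟫ := by
    rw [← neg_sub w' w, inner_neg_right]; linarith
  have hsq : ‖w - w'‖ ^ 2 ≤ ⟪x - y, w - w'⟫ := by
    have e : x - y = (w - w') + ((x - w) - (y - w')) := by abel
    rw [e, inner_add_left, real_inner_self_eq_norm_sq, inner_sub_left]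
    linarith
  have hcs := real_inner_le_norm (x - y) (w - w')
  rw [dist_eq_norm, dist_eq_norm]
  nlinarith [norm_nonneg (w - w'), norm_nonneg (x - y)]

namespace IsNearestPointMap

variable {f : E → E}

theorem inner_sub_nonpos (hP : Convex ℝ P) (hf : IsNearestPointMap P f) (x : E) :
    ∀ q ∈ P, ⟪x - f x, q - f x⟫ ≤ 0 :=
  (hP.dist_eq_infDist_iff (hf x).1).1 (hf x).2

theorem lipschitzWith_one (hP : Convex ℝ P) (hf : IsNearestPointMap P f) : LipschitzWith 1 f :=
  LipschitzWith.of_dist_le_mul fun x y => by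
    rw [NNReal.coe_one, one_mul]
    exact dist_le_of_inner_sub_nonpos (hf.inner_sub_nonpos hP x _ (hf y).1)
      (hf.inner_sub_nonpos hP y _ (hf x).1)

theorem eq_of_dist_eq_infDist (hP : Convex ℝ P) (hf : IsNearestPointMap P f) {x w : E}
    (hw : w ∈ P) (hd : dist x w = infDist x P) : f x = w := by
  have h := dist_le_of_inner_sub_nonpos (hf.inner_sub_nonpos hP x w hw)
    ((hP.dist_eq_infDist_iff hw).1 hd _ (hf x).1)
  exact dist_le_zero.1 (h.trans (dist_self x).le)

end IsNearestPointMap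

end NearestPoint

section RadialMap

def radialMap {E : Type*} [AddCommGroup E] [Module ℝ E] (f : E → E) (t : ℝ) (x : E) : E :=
  f x + t • (x - f x)

theorem radialMap_sub_self {E : Type*} [AddCommGroup E] [Module ℝ E] (f : E → E) (t : ℝ) (x : E) :
    radialMap f t x - f x = t • (x - f x) :=
  add_sub_cancel_left _ _

theorem radialMap_one {E : Type*} [AddCommGroup E] [Module ℝ E] (f : E → E) : radialMap f 1 = id := by
  ext x
  simp [radialMap]

variable {E : Type*} [NormedAddCommGroup E] [NormedSpace ℝ E] {f : E → E}

theorem dist_radialMap_le (hf : LipschitzWith 1 f) {t : ℝ} (ht : 0 ≤ t) (x y : E) :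
    dist (radialMap f t x) (radialMap f t y) ≤ (t + |1 - t|) * dist x y := by
  have e : radialMap f t x - radialMap f t y = t • (x - y) + (1 - t) • (f x - f y) := by
    simp only [radialMap]
    module
  have hfxy : ‖f x - f y‖ ≤ ‖x - y‖ := by
    simpa [dist_eq_norm] using hf.dist_le_mul x y
  rw [dist_eq_norm, dist_eq_norm, e]
  calc ‖t • (x - y) + (1 - t) • (f x - f y)‖
      ≤ t * ‖x - y‖ + |1 - t| * ‖f x - f y‖ := by
        refine (norm_add_le _ _).trans_eq ?_
        rw [norm_smul, norm_smul, Real.norm_of_nonneg ht, Real.norm_eq_abs]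
    _ ≤ (t + |1 - t|) * ‖x - y‖ := by
        nlinarith [abs_nonneg (1 - t)]

theorem lipschitzWith_one_radialMap (hf : LipschitzWith 1 f) {t : ℝ} (ht₀ : 0 ≤ t)
    (ht₁ : t ≤ 1) : LipschitzWith 1 (radialMap f t) :=
  LipschitzWith.of_dist_le_mul fun x y => by
    simpa [abs_of_nonneg (sub_nonneg.2 ht₁)] using dist_radialMap_le hf ht₀ x y

theorem lipschitzWith_radialMap_of_one_le (hf : LipschitzWith 1 f) {t : ℝ} (ht : 1 ≤ t) :
    LipschitzWith (2 * t - 1).toNNReal (radialMap f t) :=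
  LipschitzWith.of_dist_le_mul fun x y => by
    rw [Real.coe_toNNReal _ (by linarith)]
    have h := dist_radialMap_le hf (zero_le_one.trans ht) x y
    rwa [abs_of_nonpos (sub_nonpos.2 ht), neg_sub, add_sub, ← two_mul] at h

end RadialMap

namespace IsNearestPointMap

variable {E : Type*} [NormedAddCommGroup E] [InnerProductSpace ℝ E] {P : Set E} {f : E → E}

theorem apply_radialMap (hP : Convex ℝ P) (hf : IsNearestPointMap P f) {t : ℝ} (ht : 0 ≤ t)
    (x : E) : f (radialMap f t x) = f x := by
  refine hf.eq_of_dist_eq_infDist hP (hf x).1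
    ((hP.dist_eq_infDist_iff (hf x).1).2 fun q hq => ?_)
  rw [radialMap_sub_self, real_inner_smul_left]
  exact mul_nonpos_of_nonneg_of_nonpos ht (hf.inner_sub_nonpos hP x q hq)

theorem infDist_radialMap (hP : Convex ℝ P) (hf : IsNearestPointMap P f) {t : ℝ} (ht : 0 ≤ t)
    (x : E) : infDist (radialMap f t x) P = t * infDist x P := by
  rw [← (hf _).2, hf.apply_radialMap hP ht, dist_eq_norm, radialMap_sub_self, norm_smul,
    Real.norm_of_nonneg ht, ← dist_eq_norm, (hf x).2]

theorem radialMap_radialMap (hP : Convex ℝ P) (hf : IsNearestPointMap P f) (s : ℝ) {t : ℝ}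
    (ht : 0 ≤ t) (x : E) : radialMap f s (radialMap f t x) = radialMap f (s * t) x := by
  rw [radialMap, hf.apply_radialMap hP ht, radialMap_sub_self, smul_smul]
  rfl

theorem eq_radialMap_of_mem_segment (hP : Convex ℝ P) (hf : IsNearestPointMap P f)
    {x x₀ z : E} {t : ℝ} (hx₀ : x₀ ∈ P) (hd : dist x x₀ = infDist x P)
    (hz : z ∈ segment ℝ x₀ x) (hzd : infDist z P = t * infDist x P) (hx : 0 < infDist x P) :
    z = radialMap f t x := by
  rw [segment_eq_image'] at hz
  obtain ⟨s, ⟨hs, -⟩, hsz⟩ := hz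
  have hz' : z = radialMap f s x := by
    rw [← hsz, radialMap, hf.eq_of_dist_eq_infDist hP hx₀ hd]
  rw [hz', hf.infDist_radialMap hP hs] at hzd
  rw [hz', mul_right_cancel₀ hx.ne' hzd]

end IsNearestPointMap

/-- For a closed convex subset `P` of Euclidean space (of codimension at least 2, or
of codimension 1 and different from its affine span), the nearest-point projection of
`∂N_{aR}(P)` onto `∂N_R(P)` — sending `x` to the point of the segment `[x₀,x]` at
distance `R` from `P`, where `x₀` is the projection of `x` onto `P` — is bilipschitz
for the induced length metrics, with constant depending only on `a ≥ 1`. -/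
theorem projection_boundary_neighborhoods_bilipschitz :
    ∀ a : ℝ, 1 ≤ a → ∃ K : ℝ≥0∞, 0 < K ∧ K < ⊤ ∧
    ∀ (n : ℕ) (P : Set (EuclideanSpace ℝ (Fin n))),
      Convex ℝ P → IsClosed P → P.Nonempty →
      ((Module.finrank ℝ (affineSpan ℝ P).direction + 2 ≤ n) ∨
        (Module.finrank ℝ (affineSpan ℝ P).direction + 1 = n ∧
          P ≠ (affineSpan ℝ P : Set (EuclideanSpace ℝ (Fin n))))) →
      ∀ R : ℝ, 0 < R →
      ∀ p : EuclideanSpace ℝ (Fin n) → EuclideanSpace ℝ (Fin n),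
        (∀ x, infDist x P = a * R →
          ∃ x₀ ∈ P, dist x x₀ = infDist x P ∧
            p x ∈ segment ℝ x₀ x ∧ infDist (p x) P = R) →
        ∀ x y, infDist x P = a * R → infDist y P = a * R →
          lengthDist {z | infDist z P = R} (p x) (p y) ≤
              K * lengthDist {z | infDist z P = a * R} x y ∧
          lengthDist {z | infDist z P = a * R} x y ≤
              K * lengthDist {z | infDist z P = R} (p x) (p y) := by
  intro a ha
  have ha₀ : 0 < a := one_pos.trans_le ha
  have hK : 1 ≤ ENNReal.ofReal (2 * a - 1) := ENNReal.one_le_ofReal.2 (by linarith)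
  refine ⟨_, one_pos.trans_le hK, ENNReal.ofReal_lt_top, ?_⟩
  intro n P hP hPc hPne _ R hR p hp x y hx hy
  obtain ⟨f, hf⟩ := hPc.exists_isNearestPointMap hPne
  have hp_eq : ∀ z, infDist z P = a * R → p z = radialMap f a⁻¹ z := fun z hz => by
    obtain ⟨z₀, hz₀, hd, hseg, hpz⟩ := hp z hz
    exact hf.eq_radialMap_of_mem_segment hP hz₀ hd hseg
      (by rw [hpz, hz, inv_mul_cancel_left₀ ha₀.ne']) (by rw [hz]; positivity)
  have hinv : ∀ z, infDist z P = a * R → radialMap f a (p z) = z := fun z hz => by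
    rw [hp_eq z hz, hf.radialMap_radialMap hP a (by positivity), mul_inv_cancel₀ ha₀.ne',
      radialMap_one, id]
  have hin : MapsTo (radialMap f a⁻¹) {z | infDist z P = a * R} {z | infDist z P = R} :=
    fun z hz => by
      rw [mem_ofPred_eq, hf.infDist_radialMap hP (by positivity), hz.out,
        inv_mul_cancel_left₀ ha₀.ne']
  have hout : MapsTo (radialMap f a) {z | infDist z P = R} {z | infDist z P = a * R} :=
    fun z hz => by rw [mem_ofPred_eq, hf.infDist_radialMap hP ha₀.le, hz.out]
  have hfL := hf.lipschitzWith_one hP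
  constructor
  · rw [hp_eq x hx, hp_eq y hy]
    calc _ ≤ (1 : ℝ≥0) * lengthDist {z | infDist z P = a * R} x y :=
          ((lipschitzWith_one_radialMap hfL (by positivity) (inv_le_one_of_one_le₀ ha)
            ).lipschitzOnWith.lengthDist_le one_ne_zero hin x y)
      _ ≤ _ := by rw [ENNReal.coe_one]; gcongr
  · conv_lhs => rw [← hinv x hx, ← hinv y hy]
    exact (lipschitzWith_radialMap_of_one_le hfL ha).lipschitzOnWith.lengthDist_le
      (Real.toNNReal_pos.2 (by linarith)).ne' hout _ _
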